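/- Let q = (q₂, q₃, q₄) ∈ ℝ³ satisfy q₂² + q₃² + q₄² < 1 and set q₁ = √(1 − q₂² − q₃² − q₄²) > 0. Then the Euler-parameter kinematics matrix S(q) = 2 · ![![q₁ + q₂²/q₁, q₄ + q₂q₃/q₁, −q₃ + q₂q₄/q₁], ![−q₄ + q₂q₃/q₁, q₁ + q₃²/q₁, q₂ + q₃q₄/q₁], ![q₃ + q₂q₄/q₁, −q₂ + q₃q₄/q₁, q₁ + q₄²/q₁]] satisfies det S(q) = 8/q₁; in particular S(q) is invertible. -/

import Mathlib

open Matrix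

noncomputable section

/-- Cross-product matrix `v^×` of `v ∈ ℝ³`, satisfying `crossMat v *ᵥ w = v ×₃ w`. -/
def crossMat (v : Fin 3 → ℝ) : Matrix (Fin 3) (Fin 3) ℝ :=
  !![0, -v 2, v 1; v 2, 0, -v 0; -v 1, v 0, 0]

/-- The 3×3 matrix `[u v w]` with columns `u`, `v`, `w`. -/
def colMat (u v w : Fin 3 → ℝ) : Matrix (Fin 3) (Fin 3) ℝ :=
  Matrix.of fun i j => ![u, v, w] j i

/-- `i`-th partial derivative `∂_{qᵢ} S (q)` of a matrix-valued map at `q`. -/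
def pd (i : Fin 3) (S : (Fin 3 → ℝ) → Matrix (Fin 3) (Fin 3) ℝ) (q : Fin 3 → ℝ) :
    Matrix (Fin 3) (Fin 3) ℝ :=
  Matrix.of fun j k => fderiv ℝ (fun p => S p j k) q (Pi.single i 1)

/-- `i`-th partial derivative of a vector-valued map at `q`. -/
def pdv (i : Fin 3) (f : (Fin 3 → ℝ) → (Fin 3 → ℝ)) (q : Fin 3 → ℝ) : Fin 3 → ℝ :=
  fun j => fderiv ℝ (fun p => f p j) q (Pi.single i 1)

/-- The `j`-th column `Sⱼ(q)` of `S q`. -/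
def colF (S : (Fin 3 → ℝ) → Matrix (Fin 3) (Fin 3) ℝ) (j : Fin 3) (q : Fin 3 → ℝ) :
    Fin 3 → ℝ :=
  fun i => S q i j

/-- `q₁ = √(1 − q₂² − q₃² − q₄²)` for generalized coordinates `r = (q₂, q₃, q₄)`. -/
def ep1 (r : Fin 3 → ℝ) : ℝ := Real.sqrt (1 - r 0 ^ 2 - r 1 ^ 2 - r 2 ^ 2)

/-- The Euler-parameter kinematics matrix `S(q)`. -/
def Seul (r : Fin 3 → ℝ) : Matrix (Fin 3) (Fin 3) ℝ :=
  (2 : ℝ) •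
    !![ep1 r + r 0 ^ 2 / ep1 r, r 2 + r 0 * r 1 / ep1 r, -r 1 + r 0 * r 2 / ep1 r;
       -r 2 + r 0 * r 1 / ep1 r, ep1 r + r 1 ^ 2 / ep1 r, r 0 + r 1 * r 2 / ep1 r;
       r 1 + r 0 * r 2 / ep1 r, -r 0 + r 1 * r 2 / ep1 r, ep1 r + r 2 ^ 2 / ep1 r]

theorem stmt_14 (r : Fin 3 → ℝ) (h : r 0 ^ 2 + r 1 ^ 2 + r 2 ^ 2 < 1) :
    (Seul r).det = 8 / ep1 r ∧ IsUnit (Seul r) := by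
  have ha : 0 < ep1 r := Real.sqrt_pos.2 (by linarith)
  have ha2 : ep1 r ^ 2 = 1 - r 0 ^ 2 - r 1 ^ 2 - r 2 ^ 2 :=
    Real.sq_sqrt (by linarith)
  have hne : ep1 r ≠ 0 := ne_of_gt ha
  have hdet : (Seul r).det = 8 / ep1 r := by
    simp only [Seul, det_fin_three, Matrix.smul_apply, Matrix.cons_val', Matrix.cons_val_zero,
      Matrix.cons_val_one, Matrix.head_cons, Matrix.head_fin_const, Matrix.empty_val',
      Matrix.cons_val_fin_one, Matrix.cons_val_two, Matrix.tail_cons, smul_eq_mul,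
      Matrix.of_apply]
    field_simp
    linear_combination (8 * ep1 r ^ 2 * (r 0 ^ 2 + r 1 ^ 2 + r 2 ^ 2 + ep1 r ^ 2 + 1)) * ha2
  refine ⟨hdet, ?_⟩
  rw [Matrix.isUnit_iff_isUnit_det, hdet, isUnit_iff_ne_zero]
  positivity
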